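/- Let R, B ⊆ ℝ be finite sets, λ > 0, and suppose every x ∈ R is an endpoint of a closed interval I_x with |B ∩ I_x| ≥ λ·|R ∩ I_x|. Then |B| ≥ λ·|R|/3. -/

import Mathlib

/-!
Among the intervals `I_x`, `x ∈ R`, take a subfamily `S` that still covers `R`, with as few members
as possible. No point `p` lies in three members of `S`: of the members through `p`, the one reaching
furthest left and the one reaching furthest right together contain every other member through `p`,
which would then be redundant. Hence `λ |R| ≤ ∑_{x ∈ S} λ |R ∩ I_x| ≤ ∑_{x ∈ S} |B ∩ I_x| ≤ 2 |B|`.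
-/

open Finset Set

section IntervalCover

variable {α ι : Type*} [LinearOrder α] {a b : ι → α}

theorem exists_Icc_subset_biUnion_erase_of_two_lt_card [DecidableEq ι] {S : Finset ι} {p : α}
    (h : 2 < #{i ∈ S | p ∈ Icc (a i) (b i)}) :
    ∃ c ∈ S, Icc (a c) (b c) ⊆ ⋃ i ∈ S.erase c, Icc (a i) (b i) := by
  set T := {i ∈ S | p ∈ Icc (a i) (b i)}
  have hT : T.Nonempty := card_pos.1 (by omega)
  obtain ⟨l, hlT, hl⟩ := T.exists_min_image a hT
  obtain ⟨r, hrT, hr⟩ := T.exists_max_image b hT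
  obtain ⟨c, hc⟩ : (T \ {l, r}).Nonempty := card_pos.1 <| by
    have := le_card_sdiff {l, r} T
    have := card_le_two (a := l) (b := r)
    omega
  simp only [Finset.mem_sdiff, Finset.mem_insert, Finset.mem_singleton, not_or] at hc
  obtain ⟨hcT, hcl, hcr⟩ := hc
  have hsub : ∀ i ∈ T, i ≠ c → Icc (a i) (b i) ⊆ ⋃ i ∈ S.erase c, Icc (a i) (b i) := fun i hi hic ↦
    subset_biUnion_of_mem (u := fun i ↦ Icc (a i) (b i)) (mem_erase.2 ⟨hic, (mem_filter.1 hi).1⟩)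
  refine ⟨c, (mem_filter.1 hcT).1, ?_⟩
  calc Icc (a c) (b c) ⊆ Icc (a c) p ∪ Icc p (b c) := Icc_subset_Icc_union_Icc
    _ ⊆ Icc (a l) (b l) ∪ Icc (a r) (b r) :=
      union_subset_union (Icc_subset_Icc (hl c hcT) (mem_filter.1 hlT).2.2)
        (Icc_subset_Icc (mem_filter.1 hrT).2.1 (hr c hcT))
    _ ⊆ ⋃ i ∈ S.erase c, Icc (a i) (b i) :=
      union_subset (hsub l hlT (Ne.symm hcl)) (hsub r hrT (Ne.symm hcr))

theorem exists_subcover_card_filter_mem_Icc_le_two (a b : ι → α) (R : Finset ι) {P : Set α}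
    (hR : P ⊆ ⋃ i ∈ R, Icc (a i) (b i)) :
    ∃ S ⊆ R, P ⊆ ⋃ i ∈ S, Icc (a i) (b i) ∧ ∀ p, #{i ∈ S | p ∈ Icc (a i) (b i)} ≤ 2 := by
  classical
  obtain ⟨S, hS, hmin⟩ := {S ∈ R.powerset | P ⊆ ⋃ i ∈ S, Icc (a i) (b i)}.exists_min_image card
    ⟨R, mem_filter.2 ⟨mem_powerset_self R, hR⟩⟩
  obtain ⟨hSR, hSP⟩ := mem_filter.1 hS
  refine ⟨S, mem_powerset.1 hSR, hSP, fun p ↦ not_lt.1 fun hp ↦ ?_⟩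
  obtain ⟨c, hcS, hc⟩ := exists_Icc_subset_biUnion_erase_of_two_lt_card hp
  have hcover : P ⊆ ⋃ i ∈ S.erase c, Icc (a i) (b i) := by
    rw [← insert_erase hcS, set_biUnion_insert] at hSP
    exact hSP.trans (Set.union_subset hc subset_rfl)
  have hmem : S.erase c ∈ {S ∈ R.powerset | P ⊆ ⋃ i ∈ S, Icc (a i) (b i)} :=
    mem_filter.2 ⟨mem_powerset.2 ((erase_subset c S).trans (mem_powerset.1 hSR)), hcover⟩
  exact (hmin _ hmem).not_gt (card_erase_lt_of_mem hcS)

end IntervalCover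

section DoubleCounting

variable {ι β : Type*} (r : ι → β → Prop) [∀ i p, Decidable (r i p)] {S : Finset ι}

theorem card_le_sum_card_filter [DecidableEq β] {R : Finset β} (h : ∀ p ∈ R, ∃ i ∈ S, r i p) :
    #R ≤ ∑ i ∈ S, #{p ∈ R | r i p} := by
  refine (card_le_card fun p hp ↦ ?_).trans card_biUnion_le
  obtain ⟨i, hi, hip⟩ := h p hp
  exact mem_biUnion.2 ⟨i, hi, mem_filter.2 ⟨hp, hip⟩⟩

theorem sum_card_filter_le_mul_card {B : Finset β} {k : ℕ} (h : ∀ p ∈ B, #{i ∈ S | r i p} ≤ k) :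
    ∑ i ∈ S, #{p ∈ B | r i p} ≤ k * #B := by
  rw [mul_comm, ← smul_eq_mul]
  exact (sum_card_bipartiteAbove_eq_sum_card_bipartiteBelow r).trans_le
    (sum_le_card_nsmul _ _ _ h)

end DoubleCounting

theorem mul_card_le_two_mul_card_of_forall_Icc {α : Type*} [LinearOrder α] {R B : Finset α}
    (a b : α → α) {lam : ℝ} (hlam : 0 ≤ lam) (hmem : ∀ x ∈ R, x ∈ Icc (a x) (b x))
    (h : ∀ x ∈ R, lam * #{p ∈ R | p ∈ Icc (a x) (b x)} ≤ #{p ∈ B | p ∈ Icc (a x) (b x)}) :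
    lam * #R ≤ 2 * #B := by
  obtain ⟨S, hSR, hScover, hmult⟩ := exists_subcover_card_filter_mem_Icc_le_two a b R
    (P := R) fun x hx ↦ Set.mem_biUnion hx (hmem x hx)
  have hR : #R ≤ ∑ x ∈ S, #{p ∈ R | p ∈ Icc (a x) (b x)} :=
    card_le_sum_card_filter (fun x p ↦ p ∈ Icc (a x) (b x)) fun p hp ↦ by
      simpa only [Set.mem_iUnion, exists_prop] using hScover hp
  have hB : ∑ x ∈ S, #{p ∈ B | p ∈ Icc (a x) (b x)} ≤ 2 * #B :=
    sum_card_filter_le_mul_card (fun x p ↦ p ∈ Icc (a x) (b x)) fun p _ ↦ hmult p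
  calc lam * #R ≤ lam * ∑ x ∈ S, (#{p ∈ R | p ∈ Icc (a x) (b x)} : ℝ) := by
        gcongr; exact_mod_cast hR
    _ ≤ ∑ x ∈ S, (#{p ∈ B | p ∈ Icc (a x) (b x)} : ℝ) := by
        rw [mul_sum]; exact sum_le_sum fun x hx ↦ h x (hSR hx)
    _ ≤ 2 * #B := by exact_mod_cast hB

theorem red_blue_covering_unweighted_general
    (R B : Finset ℝ) (lam : ℝ)
    (h : ∀ x ∈ R, ∃ y : ℝ,
      lam * ((R.filter (fun p => min x y ≤ p ∧ p ≤ max x y)).card : ℝ) ≤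
        ((B.filter (fun p => min x y ≤ p ∧ p ≤ max x y)).card : ℝ)) :
    lam * (R.card : ℝ) / 3 ≤ (B.card : ℝ) := by
  choose! f hf using h
  have hB : (0 : ℝ) ≤ #B := Nat.cast_nonneg _
  rcases lt_or_ge lam 0 with hlam | hlam
  · have : lam * #R ≤ 0 := mul_nonpos_of_nonpos_of_nonneg hlam.le (Nat.cast_nonneg _)
    linarith
  have := mul_card_le_two_mul_card_of_forall_Icc (fun x ↦ min x (f x)) (fun x ↦ max x (f x)) hlam
    (fun x _ ↦ ⟨min_le_left _ _, le_max_left _ _⟩) hf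
  linarith

/-- Red-blue covering lemma, unweighted version: if every `x ∈ R` is an endpoint
of a closed interval `I_x` with `|B ∩ I_x| ≥ λ·|R ∩ I_x|`, then `|B| ≥ λ·|R|/3`. -/
theorem red_blue_covering_unweighted
    (R B : Finset ℝ) (lam : ℝ) (hlam : 0 < lam)
    (h : ∀ x ∈ R, ∃ y : ℝ,
      lam * ((R.filter (fun p => min x y ≤ p ∧ p ≤ max x y)).card : ℝ) ≤
        ((B.filter (fun p => min x y ≤ p ∧ p ≤ max x y)).card : ℝ)) :
    lam * (R.card : ℝ) / 3 ≤ (B.card : ℝ) :=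
  red_blue_covering_unweighted_general R B lam h
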